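/- Dynamic fit of BanSaP with two-point feedback (Theorem 2, fit bound): Under the two-point BanSaP setting, for every constant β > 0 and every realization of the random sequence u_1, …, u_T, setting ‖λ̄‖ := max_{1 ≤ t ≤ T+1} ‖λ_t‖, the dynamic fit satisfies ‖[ (1/2)·Σ_{t=1}^T ( g_t(x_{1,t}) + g_t(x_{2,t}) ) ]⁺‖ ≤ ‖λ̄‖/μ + G²√N·T/(2β) + δG√N·T + β√N·T·( α²d²G² + α²G²‖λ̄‖² ), where [·]⁺ denotes the entrywise positive part. -/

import Mathlib

/-!
Componentwise, the dual update dominates the linearised constraint,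
`λ_{t+1} ≥ λ_t + μ (g_t(x̂_t) + ⟨∇g_t(x̂_t), x̂_{t+1} - x̂_t⟩)`, so summing over `t` telescopes to
`Σ_t g_t(x̂_t) ≤ λ_{T+1} / μ + Σ_t G ‖x̂_{t+1} - x̂_t‖`. The projection is nonexpansive towards
`x̂_t ∈ (1 - γ) X`, so each primal step is at most `α (d G + G λ̄)`, and Young's inequality with
weight `β` turns `G ‖x̂_{t+1} - x̂_t‖` into `G² / (2β) + β α² (d² G² + G² λ̄²)`. Lipschitz continuity
moves from `x̂_t` to the played points `x̂_t ± δ u_t` at cost `δ G`. The resulting componentwise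
bound `λ_{T+1} / μ + c` is nonnegative, so it also bounds the positive part, and the constant
slack `c` costs a factor `√N` in the Euclidean norm.
-/

open Metric Finset
open scoped Pointwise RealInnerProductSpace

def posPart' {N : ℕ} (v : EuclideanSpace ℝ (Fin N)) : EuclideanSpace ℝ (Fin N) :=
  WithLp.toLp 2 (fun n => max (v n) 0)

section NormedSpace
variable {E : Type*} [NormedAddCommGroup E] [NormedSpace ℝ E]

noncomputable def twoPointGradEst (d : ℕ) (f : E → ℝ) (δ : ℝ) (x u : E) : E :=
  ((d : ℝ) / (2 * δ) * (f (x + δ • u) - f (x - δ • u))) • u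

variable {h : E → ℝ} {G δ : ℝ} {u : E}

theorem apply_add_smul_add_apply_sub_smul_le (hh : ∀ x y, |h x - h y| ≤ G * ‖x - y‖)
    (hδ : 0 ≤ δ) (hu : ‖u‖ = 1) (x : E) :
    h (x + δ • u) + h (x - δ • u) ≤ 2 * (h x + δ * G) := by
  have hp := hh (x + δ • u) x
  have hm := hh (x - δ • u) x
  simp only [add_sub_cancel_left, sub_sub_cancel_left, norm_neg, norm_smul, hu,
    Real.norm_of_nonneg hδ, mul_one] at hp hm
  linarith [(abs_le.1 hp).2, (abs_le.1 hm).2]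

theorem norm_twoPointGradEst_le (hh : ∀ x y, |h x - h y| ≤ G * ‖x - y‖) (hδ : 0 < δ)
    (hu : ‖u‖ = 1) (d : ℕ) (x : E) : ‖twoPointGradEst d h δ x u‖ ≤ d * G := by
  have hdiff : |h (x + δ • u) - h (x - δ • u)| ≤ 2 * δ * G := by
    have := hh (x + δ • u) (x - δ • u)
    rwa [add_sub_sub_cancel, ← two_smul ℝ, smul_smul, norm_smul, hu, mul_one,
      Real.norm_of_nonneg (by positivity), mul_comm G] at this
  rw [twoPointGradEst, norm_smul, hu, mul_one, norm_mul, Real.norm_of_nonneg (by positivity),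
    Real.norm_eq_abs]
  calc (d : ℝ) / (2 * δ) * |h (x + δ • u) - h (x - δ • u)|
      ≤ d / (2 * δ) * (2 * δ * G) := by gcongr
    _ = d * G := by field_simp

end NormedSpace

theorem mul_le_sq_div_add_of_le_mul_add {G s α d L β : ℝ} (hβ : 0 < β) (hs0 : 0 ≤ s)
    (hs : s ≤ α * (d * G + G * L)) :
    G * s ≤ G ^ 2 / (2 * β) + β * (α ^ 2 * d ^ 2 * G ^ 2 + α ^ 2 * G ^ 2 * L ^ 2) := by
  have hyoung : G * s ≤ G ^ 2 / (2 * β) + β / 2 * s ^ 2 := by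
    have : 0 ≤ (G - β * s) ^ 2 / (2 * β) := by positivity
    have heq : (G - β * s) ^ 2 / (2 * β) = G ^ 2 / (2 * β) + β / 2 * s ^ 2 - G * s := by
      field_simp; ring
    linarith
  have hsq : s ^ 2 ≤ 2 * (α ^ 2 * d ^ 2 * G ^ 2 + α ^ 2 * G ^ 2 * L ^ 2) :=
    calc s ^ 2 ≤ (α * (d * G + G * L)) ^ 2 := by gcongr
      _ = (α * d * G + α * G * L) ^ 2 := by ring
      _ ≤ 2 * ((α * d * G) ^ 2 + (α * G * L) ^ 2) := add_sq_le
      _ = 2 * (α ^ 2 * d ^ 2 * G ^ 2 + α ^ 2 * G ^ 2 * L ^ 2) := by ring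
  nlinarith

theorem mul_le_sub_add_of_eq_max {l l' μ c a b : ℝ} (hl' : l' = max (l + μ * (c + a)) 0)
    (hμ : 0 ≤ μ) (ha : |a| ≤ b) : μ * c ≤ l' - l + μ * b := by
  have := le_max_left (l + μ * (c + a)) 0
  nlinarith [neg_abs_le a]

section InnerProductSpace
variable {E : Type*} [NormedAddCommGroup E] [InnerProductSpace ℝ E]

theorem IsMinOn.norm_sub_le_norm_sub {K : Set E} (hK : Convex ℝ K) {y p v : E}
    (hmin : IsMinOn (fun z => ‖z - y‖) K p) (hp : p ∈ K) (hv : v ∈ K) :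
    ‖p - v‖ ≤ ‖y - v‖ := by
  have : Nonempty K := ⟨⟨p, hp⟩⟩
  have hinf : ‖y - p‖ = ⨅ w : K, ‖y - w‖ := by
    have hbdd : BddBelow (Set.range fun w : K => ‖y - w‖) :=
      ⟨0, Set.forall_mem_range.2 fun _ => norm_nonneg _⟩
    refine le_antisymm (le_ciInf fun w => ?_) (ciInf_le hbdd ⟨p, hp⟩)
    simpa only [norm_sub_rev y] using isMinOn_iff.1 hmin w w.2
  have hvar := (norm_eq_iInf_iff_real_inner_le_zero hK hp).1 hinf v hv
  have hsplit : ‖y - v‖ ^ 2 = ‖y - p‖ ^ 2 - 2 * ⟪y - p, v - p⟫ + ‖p - v‖ ^ 2 := by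
    rw [show y - v = (y - p) - (v - p) by abel, norm_sub_sq_real, norm_sub_rev v p]
  nlinarith [norm_nonneg (p - v), norm_nonneg (y - v), sq_nonneg ‖y - p‖]

variable [CompleteSpace E] {ι : Type*} [Fintype ι]

theorem sum_smul_gradient_eq_adjoint_fderiv {g : E → EuclideanSpace ℝ ι} {x : E}
    (hg : DifferentiableAt ℝ g x) (l : EuclideanSpace ℝ ι) :
    ∑ n, l n • gradient (fun y => g y n) x = ContinuousLinearMap.adjoint (fderiv ℝ g x) l := by
  refine ext_inner_right ℝ fun w => ?_
  have hcomp : ∀ n, fderiv ℝ (fun y => g y n) x w = fderiv ℝ g x w n := fun n =>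
    congrArg (· w) ((EuclideanSpace.proj n).hasFDerivAt.comp x hg.hasFDerivAt).fderiv
  simp only [sum_inner, real_inner_smul_left, gradient, InnerProductSpace.toDual_symm_apply,
    hcomp, ContinuousLinearMap.adjoint_inner_left, PiLp.inner_apply, RCLike.inner_apply,
    conj_trivial]
  exact sum_congr rfl fun _ _ => mul_comm _ _

theorem norm_sum_smul_gradient_le {g : E → EuclideanSpace ℝ ι} {x : E}
    (hg : DifferentiableAt ℝ g x) (l : EuclideanSpace ℝ ι) :
    ‖∑ n, l n • gradient (fun y => g y n) x‖ ≤ ‖fderiv ℝ g x‖ * ‖l‖ := by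
  rw [sum_smul_gradient_eq_adjoint_fderiv hg, ← LinearIsometryEquiv.norm_map
    ContinuousLinearMap.adjoint (fderiv ℝ g x)]
  exact ContinuousLinearMap.le_opNorm _ _

theorem bansap_round_le {K : Set E} (hK : Convex ℝ K) {f : E → ℝ} {g : E → EuclideanSpace ℝ ι}
    {G α μ δ β L : ℝ} (d : ℕ) {x x' u : E} {l l' : EuclideanSpace ℝ ι}
    (hf : ∀ x y, |f x - f y| ≤ G * ‖x - y‖) (hg : ∀ n x y, |g x n - g y n| ≤ G * ‖x - y‖)
    (hgx : DifferentiableAt ℝ g x) (hgrad : ∀ n, ‖gradient (fun y => g y n) x‖ ≤ G)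
    (hjac : ‖fderiv ℝ g x‖ ≤ G) (hα : 0 < α) (hμ : 0 < μ) (hδ : 0 < δ) (hβ : 0 < β)
    (hu : ‖u‖ = 1) (hx : x ∈ K) (hx' : x' ∈ K) (hl : ‖l‖ ≤ L)
    (hmin : IsMinOn (fun z => ‖z - (x - α •
      (twoPointGradEst d f δ x u + ∑ n, l n • gradient (fun y => g y n) x))‖) K x')
    (hl' : ∀ n, l' n = max (l n + μ * (g x n + ⟪gradient (fun y => g y n) x, x' - x⟫)) 0)
    (n : ι) :
    (g (x + δ • u) n + g (x - δ • u) n) / 2 ≤ (l' n - l n) / μ +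
      (G ^ 2 / (2 * β) + β * (α ^ 2 * d ^ 2 * G ^ 2 + α ^ 2 * G ^ 2 * L ^ 2) + δ * G) := by
  have hG : 0 ≤ G := (norm_nonneg _).trans hjac
  have hstep : ‖x' - x‖ ≤ α * (d * G + G * L) := by
    have := hmin.norm_sub_le_norm_sub hK hx' hx
    rw [sub_sub_cancel_left, norm_neg, norm_smul, Real.norm_of_nonneg hα.le] at this
    refine this.trans (mul_le_mul_of_nonneg_left ((norm_add_le _ _).trans (add_le_add
      (norm_twoPointGradEst_le hf hδ hu d x) ?_)) hα.le)
    exact (norm_sum_smul_gradient_le hgx l).trans (mul_le_mul hjac hl (norm_nonneg _) hG)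
  have hdual : μ * g x n ≤ l' n - l n + μ * (G * ‖x' - x‖) :=
    mul_le_sub_add_of_eq_max (hl' n) hμ.le
      ((abs_real_inner_le_norm _ _).trans (mul_le_mul_of_nonneg_right (hgrad n) (norm_nonneg _)))
  have hyoung := mul_le_sq_div_add_of_le_mul_add hβ (norm_nonneg _) hstep
  have hpair := apply_add_smul_add_apply_sub_smul_le (hg n) hδ.le hu x
  have hdual' : g x n ≤ (l' n - l n) / μ + G * ‖x' - x‖ := by
    rw [div_add' _ _ _ hμ.ne', le_div_iff₀ hμ]; linarith
  linarith

end InnerProductSpace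

theorem norm_posPart'_le {N : ℕ} {v a : EuclideanSpace ℝ (Fin N)} {c : ℝ}
    (ha : ∀ n, 0 ≤ a n) (hc : 0 ≤ c) (hv : ∀ n, v n ≤ a n + c) :
    ‖posPart' v‖ ≤ ‖a‖ + √N * c := by
  let one : EuclideanSpace ℝ (Fin N) := WithLp.toLp 2 fun _ => 1
  have hone : ‖one‖ = √N := by simp [one, EuclideanSpace.norm_eq]
  calc ‖posPart' v‖ ≤ ‖a + c • one‖ := by
        simp only [EuclideanSpace.norm_eq, Real.norm_eq_abs]
        gcongr with n
        · exact le_max_right _ _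
        · simpa [posPart', one] using ⟨hv n, add_nonneg (ha n) hc⟩
    _ ≤ ‖a‖ + √N * c := by
        grw [norm_add_le, norm_smul, hone, Real.norm_of_nonneg hc, mul_comm]

theorem sum_le_of_le_sub_div_add {T : ℕ} {a l : ℕ → ℝ} {μ c : ℝ}
    (h : ∀ t ∈ Icc 1 T, a t ≤ (l (t + 1) - l t) / μ + c) :
    ∑ t ∈ Icc 1 T, a t ≤ (l (T + 1) - l 1) / μ + T * c := by
  grw [sum_le_sum h, sum_add_distrib, ← sum_div, ← Ico_add_one_right_eq_Icc,
    sum_Ico_sub l (by omega), sum_const, Nat.card_Ico, nsmul_eq_mul]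
  simp

theorem norm_posPart'_sum_le_of_le_sub_div_add {N T : ℕ} {a l : ℕ → EuclideanSpace ℝ (Fin N)}
    {μ c L : ℝ} (hμ : 0 < μ) (hc : 0 ≤ T * c) (hl₁ : l 1 = 0) (hl : ∀ n, 0 ≤ l (T + 1) n)
    (hL : ‖l (T + 1)‖ ≤ L) (h : ∀ t ∈ Icc 1 T, ∀ n, a t n ≤ (l (t + 1) n - l t n) / μ + c) :
    ‖posPart' (∑ t ∈ Icc 1 T, a t)‖ ≤ L / μ + √N * (T * c) :=
  calc _ ≤ ‖μ⁻¹ • l (T + 1)‖ + √N * (T * c) := by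
        refine norm_posPart'_le (fun n => ?_) hc (fun n => ?_)
        · simpa using mul_nonneg (inv_nonneg.2 hμ.le) (hl n)
        · simpa [hl₁, div_eq_inv_mul] using
            sum_le_of_le_sub_div_add (l := fun t => l t n) (h · · n)
    _ ≤ L / μ + √N * (T * c) := by
        rw [norm_smul, Real.norm_of_nonneg (inv_nonneg.2 hμ.le), inv_mul_eq_div]
        gcongr

theorem forall_mem_Icc_one_add_one {P : ℕ → Prop} {T : ℕ} (h1 : P 1)
    (hsucc : ∀ t ∈ Icc 1 T, P (t + 1)) : ∀ t ∈ Icc 1 (T + 1), P t := by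
  rintro (_ | _ | t) ht
  · simp at ht
  · exact h1
  · exact hsucc (t + 1) (by simp only [mem_Icc] at ht ⊢; omega)

/-- Dynamic fit of BanSaP with two-point feedback (Theorem 2, fit bound):
for any realization of the perturbations `u_1,…,u_T` and any `β > 0`, with
`λ̄ = max_{1 ≤ t ≤ T+1} ‖λ_t‖`, the dynamic fit satisfies
`‖[(1/2)Σ_t (g_t(x_{1,t}) + g_t(x_{2,t}))]⁺‖ ≤ λ̄/μ + G²√N T/(2β) + δG√N T
  + β√N T(α²d²G² + α²G²λ̄²)`. -/
theorem bansap_two_point_dynamic_fit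
    (d N T : ℕ)
    (X : Set (EuclideanSpace ℝ (Fin d)))
    (hXconv : Convex ℝ X)
    (r G : ℝ) (hr : 0 < r)
    (hXball : closedBall (0 : EuclideanSpace ℝ (Fin d)) r ⊆ X)
    (f : ℕ → EuclideanSpace ℝ (Fin d) → ℝ)
    (g : ℕ → EuclideanSpace ℝ (Fin d) → EuclideanSpace ℝ (Fin N))
    (hf_lip : ∀ t ∈ Icc 1 T, ∀ x y, |f t x - f t y| ≤ G * ‖x - y‖)
    (hg_diff : ∀ t ∈ Icc 1 T, ∀ n, Differentiable ℝ (fun x => g t x n))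
    (hg_grad : ∀ t ∈ Icc 1 T, ∀ n, ∀ x ∈ X, ‖gradient (fun y => g t y n) x‖ ≤ G)
    (hg_lip : ∀ t ∈ Icc 1 T, ∀ n, ∀ x y, |g t x n - g t y n| ≤ G * ‖x - y‖)
    (hg_jac : ∀ t ∈ Icc 1 T, ∀ x ∈ X, ‖fderiv ℝ (g t) x‖ ≤ G)
    (α μ δ γ : ℝ) (hα : 0 < α) (hμ : 0 < μ) (hδ : 0 < δ)
    (hγ : γ = δ / r) (hγ1 : γ < 1)
    (u : ℕ → EuclideanSpace ℝ (Fin d))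
    (hu : ∀ t ∈ Icc 1 T, ‖u t‖ = 1)
    (xhat : ℕ → EuclideanSpace ℝ (Fin d))
    (lam : ℕ → EuclideanSpace ℝ (Fin N))
    (hx1 : xhat 1 ∈ (1 - γ) • X)
    (hlam1 : lam 1 = 0)
    (hxrec : ∀ t ∈ Icc 1 T,
      xhat (t + 1) ∈ (1 - γ) • X ∧
      ∀ z ∈ (1 - γ) • X,
        ‖xhat (t + 1) - (xhat t - α •
            (((d : ℝ) / (2 * δ) * (f t (xhat t + δ • u t) - f t (xhat t - δ • u t))) • u t
              + ∑ n, lam t n • gradient (fun y => g t y n) (xhat t)))‖ ≤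
        ‖z - (xhat t - α •
            (((d : ℝ) / (2 * δ) * (f t (xhat t + δ • u t) - f t (xhat t - δ • u t))) • u t
              + ∑ n, lam t n • gradient (fun y => g t y n) (xhat t)))‖)
    (hlamrec : ∀ t ∈ Icc 1 T, ∀ n,
      lam (t + 1) n = max (lam t n + μ * (g t (xhat t) n
        + ⟪gradient (fun y => g t y n) (xhat t), xhat (t + 1) - xhat t⟫)) 0)
    (β : ℝ) (hβ : 0 < β)
    (lambar : ℝ)
    (hlambar : lambar =
      (Icc 1 (T + 1)).sup' (Finset.nonempty_Icc.mpr (by omega)) (fun t => ‖lam t‖)) :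
    ‖posPart' ((1 / 2 : ℝ) •
        ∑ t ∈ Icc 1 T, (g t (xhat t + δ • u t) + g t (xhat t - δ • u t)))‖ ≤
      lambar / μ + G ^ 2 * Real.sqrt N * T / (2 * β) + δ * G * Real.sqrt N * T
        + β * Real.sqrt N * T *
            (α ^ 2 * (d : ℝ) ^ 2 * G ^ 2 + α ^ 2 * G ^ 2 * lambar ^ 2) := by
  have hKX : (1 - γ) • X ⊆ X := Set.smul_set_subset_iff.2 fun x hx =>
    hXconv.smul_mem_of_zero_mem (hXball (mem_closedBall_self hr.le)) hx
      ⟨by linarith, by linarith [hγ ▸ div_nonneg hδ.le hr.le]⟩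
  have hxK : ∀ t ∈ Icc 1 (T + 1), xhat t ∈ (1 - γ) • X :=
    forall_mem_Icc_one_add_one hx1 fun t ht => (hxrec t ht).1
  have hlam_nonneg : ∀ t ∈ Icc 1 (T + 1), ∀ n, 0 ≤ lam t n :=
    forall_mem_Icc_one_add_one (by simp [hlam1]) fun t ht n =>
      (hlamrec t ht n) ▸ le_max_right _ _
  have hlam_le : ∀ t ∈ Icc 1 (T + 1), ‖lam t‖ ≤ lambar := fun t ht =>
    hlambar ▸ le_sup' (fun t => ‖lam t‖) ht
  have hIcc : ∀ t ∈ Icc 1 T, t ∈ Icc 1 (T + 1) ∧ t + 1 ∈ Icc 1 (T + 1) := by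
    intro t ht; simp only [mem_Icc] at ht ⊢; omega
  set c := G ^ 2 / (2 * β) + β * (α ^ 2 * (d : ℝ) ^ 2 * G ^ 2 + α ^ 2 * G ^ 2 * lambar ^ 2)
    + δ * G with hc
  have hround : ∀ t ∈ Icc 1 T, ∀ n, (g t (xhat t + δ • u t) n + g t (xhat t - δ • u t) n) / 2
      ≤ (lam (t + 1) n - lam t n) / μ + c := by
    intro t ht
    obtain ⟨ht₁, ht₂⟩ := hIcc t ht
    exact bansap_round_le (hXconv.smul _) d (hf_lip t ht) (hg_lip t ht)
      (differentiable_euclidean.2 (hg_diff t ht) _) (fun n => hg_grad t ht n _ (hKX (hxK t ht₁)))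
      (hg_jac t ht _ (hKX (hxK t ht₁))) hα hμ hδ hβ (hu t ht) (hxK t ht₁) (hxK (t + 1) ht₂)
      (hlam_le t ht₁) (isMinOn_iff.2 (hxrec t ht).2) (hlamrec t ht)
  -- `0 ≤ G` can only be read off a round, so the empty horizon is handled separately.
  have hTc : 0 ≤ (T : ℝ) * c := by
    rcases T.eq_zero_or_pos with rfl | hT
    · simp
    · have h1 : 1 ∈ Icc 1 T := mem_Icc.2 ⟨le_rfl, hT⟩
      have hG : 0 ≤ G := (norm_nonneg _).trans (hg_jac 1 h1 _ (hKX (hxK 1 (hIcc 1 h1).1)))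
      positivity
  have hT1 : T + 1 ∈ Icc 1 (T + 1) := by simp
  rw [smul_sum]
  refine (norm_posPart'_sum_le_of_le_sub_div_add hμ hTc hlam1 (hlam_nonneg _ hT1)
    (hlam_le _ hT1) fun t ht n => ?_).trans_eq (by rw [hc]; field_simp; ring)
  simpa [div_eq_inv_mul, mul_add] using hround t ht n
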